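/- Assume n ≥ 1. Let γ be a hook partition and let λ and μ be hook partitions each obtained from γ by adding a single box, say box b_λ for λ and box b_μ for μ. Then ⟨λ̄, λ̄ + 2ρ⟩ − ⟨μ̄, μ̄ + 2ρ⟩ = 2·c(b_λ) − 2·c(b_μ), where c denotes the content of a box. -/

import Mathlib

/-! Common definitions: the weight lattice `ℤ^{n+m}` is modeled as functions `ℕ → ℤ`
(only the coordinates `1, …, n+m` are relevant), with standard basis vectors `eps i`.
Index `i` has parity 0 if `i ≤ n` and parity 1 otherwise. -/

namespace TwoBoundary

/-- The standard basis vector `ε_i` of the weight lattice. -/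
def eps (i : ℕ) : ℕ → ℤ := fun k => if k = i then 1 else 0

/-- The sign of the positive root `ε_i − ε_j`: `+1` if it is even
(i.e. the parities of `i` and `j` agree), `−1` if it is odd. -/
def rootSign (n i j : ℕ) : ℤ := if (i ≤ n) = (j ≤ n) then 1 else -1

/-- `2ρ` = (sum of even positive roots) − (sum of odd positive roots). -/
def twoRho (n m : ℕ) : ℕ → ℤ :=
  ∑ i ∈ Finset.Icc 1 (n + m), ∑ j ∈ Finset.Icc 1 (n + m),
    if i < j then rootSign n i j • (eps i - eps j) else 0

/-- The bilinear form with `⟨ε_i, ε_j⟩ = (−1)^{parity i} δ_{ij}`. -/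
def form (n m : ℕ) (μ ν : ℕ → ℤ) : ℤ :=
  ∑ i ∈ Finset.Icc 1 (n + m), (if i ≤ n then (1 : ℤ) else -1) * (μ i * ν i)

/-- `φ_t = ε_1 + ⋯ + ε_t`. -/
def phi (t : ℕ) : ℕ → ℤ := fun k => if 1 ≤ k ∧ k ≤ t then 1 else 0

/-- `ψ_s = ε_{n+1} + ⋯ + ε_{n+s}`. -/
def psi (n s : ℕ) : ℕ → ℤ := fun k => if n + 1 ≤ k ∧ k ≤ n + s then 1 else 0

/-- A partition, given by its sequence of parts `λ_1 ≥ λ_2 ≥ ⋯` (the index-0 value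
is normalized to `0`): weakly decreasing with finitely many nonzero terms. -/
def IsPartition (lam : ℕ → ℕ) : Prop :=
  lam 0 = 0 ∧ (∀ i, 1 ≤ i → lam (i + 1) ≤ lam i) ∧ ∃ N, ∀ i, N ≤ i → lam i = 0

/-- A hook partition (relative to `(n, m)`): a partition with `λ_{n+1} ≤ m`. -/
def IsHookPartition (n m : ℕ) (lam : ℕ → ℕ) : Prop :=
  IsPartition lam ∧ lam (n + 1) ≤ m

/-- The weight `λ̄` associated to a hook partition `λ`:
`λ̄_i = λ_i` for `1 ≤ i ≤ n`, and `λ̄_{n+j} = #{k > n : λ_k ≥ j}` for `1 ≤ j ≤ m`. -/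
noncomputable def barWeight (n m : ℕ) (lam : ℕ → ℕ) : ℕ → ℤ := fun i =>
  if 1 ≤ i ∧ i ≤ n then (lam i : ℤ)
  else if n + 1 ≤ i ∧ i ≤ n + m then ({k : ℕ | n < k ∧ i - n ≤ lam k}.ncard : ℤ)
  else 0

/-- The set `𝒫₀` of partitions occurring in the decomposition of
`L((a^p)) ⊗ L((b^q))` (for `q ≤ p`), by the combinatorial description of
Okada and Stanley. -/
def InP0 (a b p q : ℕ) (lam : ℕ → ℕ) : Prop :=
  IsPartition lam ∧
  (∀ i, p + q < i → lam i = 0) ∧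
  (∀ i, 1 ≤ i → i ≤ q → lam i + lam (p + q + 1 - i) = a + b) ∧
  (∀ i, q + 1 ≤ i → i ≤ p → lam i = a) ∧
  (∀ i, 1 ≤ i → i ≤ q → max a b ≤ lam i)

/-!
Adding the box `(r, c)` to `γ` changes `γ̄` by a single basis vector `ε_k`: `k = r` if
`r ≤ n`, and `k = n + c` otherwise, since below row `n` the new box lies in column `c` of the
transposed part, which `γ` already fills in the rows `n + 1, …, r - 1`. Hence `⟨γ̄, γ̄ + 2ρ⟩`
changes by `±(2 γ̄_k + 1 + (2ρ)_k)`, and from `(2ρ)_k = n - m + 1 - 2k` for `k ≤ n` and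
`(2ρ)_{n+c} = n + m + 1 - 2c` both cases give `2 (c - r) + n - m`. The term `n - m` cancels
in the difference for `λ` and `μ`.
-/

open Finset

def paritySign (n i : ℕ) : ℤ := if i ≤ n then 1 else -1

lemma rootSign_eq_mul (n i j : ℕ) : rootSign n i j = paritySign n i * paritySign n j := by
  unfold rootSign paritySign
  by_cases hi : i ≤ n <;> by_cases hj : j ≤ n <;> simp [hi, hj]

lemma sum_paritySign_Ioc (n : ℕ) {a b : ℕ} (hab : a ≤ b) :
    ∑ j ∈ Ioc a b, paritySign n j
      = 2 * ((min n b : ℕ) - (min n a : ℕ) : ℤ) - (b - a : ℤ) := by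
  induction b, hab using Nat.le_induction with
  | base => simp
  | succ b hab ih => rw [sum_Ioc_succ_top hab, ih]; unfold paritySign; split_ifs <;> omega

lemma twoRho_apply_eq_sum {n m k : ℕ} (hk : k ∈ Icc 1 (n + m)) :
    twoRho n m k = ∑ j ∈ Icc 1 (n + m) with k < j, rootSign n k j
      - ∑ i ∈ Icc 1 (n + m) with i < k, rootSign n i k := by
  simp only [twoRho, Finset.sum_apply, apply_ite (fun f : ℕ → ℤ => f k), Pi.smul_apply,
    Pi.sub_apply, Pi.zero_apply, eps, smul_eq_mul, mul_sub, mul_ite, mul_one, mul_zero, sum_filter]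
  have hsplit : ∀ i j, (if i < j then (if k = i then rootSign n i j else 0)
      - (if k = j then rootSign n i j else 0) else 0)
      = (if k = i then (if k < j then rootSign n k j else 0) else 0)
        - (if k = j then (if i < k then rootSign n i k else 0) else 0) := by
    intro i j; split_ifs <;> first | omega | simp_all
  simp only [hsplit, sum_sub_distrib]
  rw [sum_comm (f := fun i j => if k = i then _ else 0)]
  simp only [sum_ite_eq, hk, if_true]

lemma twoRho_apply {n m k : ℕ} (hk : k ∈ Icc 1 (n + m)) :
    twoRho n m k = paritySign n k *
      (∑ j ∈ Ioc k (n + m), paritySign n j - ∑ i ∈ Ioc 0 (k - 1), paritySign n i) := by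
  have hgt : {j ∈ Icc 1 (n + m) | k < j} = Ioc k (n + m) := by
    ext j; simp only [mem_filter, mem_Icc, mem_Ioc] at hk ⊢; omega
  have hlt : {i ∈ Icc 1 (n + m) | i < k} = Ioc 0 (k - 1) := by
    ext i; simp only [mem_filter, mem_Icc, mem_Ioc] at hk ⊢; omega
  simp only [twoRho_apply_eq_sum hk, hgt, hlt, rootSign_eq_mul, ← mul_sum, ← sum_mul]
  ring

lemma twoRho_apply_of_le {n m k : ℕ} (hk : 1 ≤ k) (hkn : k ≤ n) :
    twoRho n m k = n - m + 1 - 2 * k := by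
  rw [twoRho_apply (mem_Icc.2 ⟨by omega, by omega⟩), sum_paritySign_Ioc n (by omega),
    sum_paritySign_Ioc n (by omega)]
  simp only [paritySign, if_pos hkn]
  omega

lemma twoRho_apply_add {n m c : ℕ} (hc : 1 ≤ c) (hcm : c ≤ m) :
    twoRho n m (n + c) = n + m + 1 - 2 * c := by
  rw [twoRho_apply (mem_Icc.2 ⟨by omega, by omega⟩), sum_paritySign_Ioc n (by omega),
    sum_paritySign_Ioc n (by omega)]
  simp only [paritySign, if_neg (by omega : ¬ n + c ≤ n)]
  omega

lemma form_add_eps_sub_form {n m k : ℕ} (hk : k ∈ Icc 1 (n + m)) (g v : ℕ → ℤ) :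
    form n m (g + eps k) (g + eps k + v) - form n m g (g + v)
      = paritySign n k * (2 * g k + 1 + v k) := by
  unfold form
  rw [← sum_sub_distrib, sum_eq_single_of_mem k hk]
  · simp only [Pi.add_apply, eps, if_true, paritySign]
    ring
  · intro i _ hik
    simp only [Pi.add_apply, eps, if_neg hik]
    ring

lemma IsPartition.apply_le_apply {p : ℕ → ℕ} (hp : IsPartition p) {i j : ℕ} (hi : 1 ≤ i)
    (hij : i ≤ j) : p j ≤ p i := by
  induction j, hij using Nat.le_induction with
  | base => rfl
  | succ k hk ih => exact (hp.2.1 k (by omega)).trans ih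

lemma IsPartition.finite_setOf_le {p : ℕ → ℕ} (hp : IsPartition p) {j : ℕ} (hj : 1 ≤ j) :
    {k | j ≤ p k}.Finite := by
  obtain ⟨N, hN⟩ := hp.2.2
  refine (Set.finite_Iio N).subset fun k hk => ?_
  by_contra hkN
  have := hN k (not_lt.mp hkN)
  simp only [Set.mem_ofPred_eq] at hk
  omega

def AddsBox (gam lam : ℕ → ℕ) (r : ℕ) : Prop :=
  lam r = gam r + 1 ∧ ∀ i, 1 ≤ i → i ≠ r → lam i = gam i

section AddsBox

variable {n m r : ℕ} {gam lam : ℕ → ℕ}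

lemma barWeight_eq_add_eps_of_le (hr : 1 ≤ r) (hrn : r ≤ n) (h : AddsBox gam lam r) :
    barWeight n m lam = barWeight n m gam + eps r := by
  have hcol : ∀ j, {k | n < k ∧ j ≤ lam k} = {k | n < k ∧ j ≤ gam k} := fun j =>
    Set.ext fun k => and_congr_right fun hk => by rw [h.2 k (by omega) (by omega)]
  funext i
  by_cases hir : i = r
  · subst hir
    simp [barWeight, eps, h.1, hr, hrn]
  · simp only [barWeight, Pi.add_apply, eps, if_neg hir, add_zero, hcol]
    split_ifs with hi
    · rw [h.2 i hi.1 hir]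
    all_goals rfl

lemma setOf_lt_and_le_eq_of_ne {j : ℕ} (h : AddsBox gam lam r) (hj : j ≠ lam r) :
    {k | n < k ∧ j ≤ lam k} = {k | n < k ∧ j ≤ gam k} := by
  ext k
  simp only [Set.mem_ofPred_eq, and_congr_right_iff]
  intro hk
  rcases eq_or_ne k r with rfl | hkr
  · have := h.1
    omega
  · rw [h.2 k (by omega) hkr]

lemma setOf_lt_and_le_eq_insert (hrn : n < r) (h : AddsBox gam lam r) :
    {k | n < k ∧ lam r ≤ lam k} = insert r {k | n < k ∧ lam r ≤ gam k} := by
  ext k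
  simp only [Set.mem_ofPred_eq, Set.mem_insert_iff]
  rcases eq_or_ne k r with rfl | hkr
  · simp [hrn]
  · simp only [hkr, false_or]
    exact and_congr_right fun hk => by rw [h.2 k (by omega) hkr]

lemma barWeight_eq_add_eps_of_lt (hgam : IsPartition gam) (hlam : IsHookPartition n m lam)
    (hrn : n < r) (h : AddsBox gam lam r) :
    barWeight n m lam = barWeight n m gam + eps (n + lam r) := by
  have hc := h.1
  have hcm : lam r ≤ m := (hlam.1.apply_le_apply (by omega) hrn).trans hlam.2
  funext i
  rcases eq_or_ne i (n + lam r) with rfl | hi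
  · have hr : r ∉ {k | n < k ∧ lam r ≤ gam k} := fun hmem => by have := hmem.2; omega
    simp only [barWeight, Pi.add_apply, eps, if_true,
      if_neg (by omega : ¬(1 ≤ n + lam r ∧ n + lam r ≤ n)),
      if_pos (by omega : n + 1 ≤ n + lam r ∧ n + lam r ≤ n + m), Nat.add_sub_cancel_left,
      setOf_lt_and_le_eq_insert hrn h,
      Set.ncard_insert_of_notMem hr ((hgam.finite_setOf_le (by omega)).subset fun k hk => hk.2)]
    push_cast; ring
  · simp only [barWeight, Pi.add_apply, eps, if_neg hi, add_zero]
    split_ifs with hlo hhi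
    · rw [h.2 i hlo.1 (by omega)]
    · rw [setOf_lt_and_le_eq_of_ne h (by omega)]
    · rfl

lemma setOf_lt_and_le_eq_Ioc (hgam : IsPartition gam) (hlam : IsPartition lam) (hr : 1 ≤ r)
    (h : AddsBox gam lam r) : {k | n < k ∧ lam r ≤ gam k} = Set.Ioc n (r - 1) := by
  ext k
  simp only [Set.mem_ofPred_eq, Set.mem_Ioc, and_congr_right_iff]
  intro hk
  constructor
  · intro hle
    have := h.1
    by_contra! hkr
    have := hgam.apply_le_apply hr (by omega : r ≤ k)
    omega
  · intro hkr
    rw [← h.2 k (by omega) (by omega)]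
    exact hlam.apply_le_apply (by omega) (by omega)

lemma barWeight_apply_add_of_addsBox (hgam : IsPartition gam) (hlam : IsHookPartition n m lam)
    (hr : 1 ≤ r) (hrn : n < r) (h : AddsBox gam lam r) :
    barWeight n m gam (n + lam r) = r - 1 - n := by
  have hc := h.1
  have hcm : lam r ≤ m := (hlam.1.apply_le_apply (by omega) hrn).trans hlam.2
  rw [barWeight, if_neg (by omega), if_pos (by omega), Nat.add_sub_cancel_left,
    setOf_lt_and_le_eq_Ioc hgam hlam.1 hr h, Set.ncard_Ioc_nat]
  omega

lemma form_barWeight_sub_of_addsBox (hgam : IsPartition gam) (hlam : IsHookPartition n m lam)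
    (hr : 1 ≤ r) (h : AddsBox gam lam r) :
    form n m (barWeight n m lam) (barWeight n m lam + twoRho n m)
      - form n m (barWeight n m gam) (barWeight n m gam + twoRho n m)
      = 2 * ((lam r : ℤ) - r) + (n - m) := by
  have hc := h.1
  by_cases hrn : r ≤ n
  · rw [barWeight_eq_add_eps_of_le hr hrn h,
      form_add_eps_sub_form (mem_Icc.2 ⟨by omega, by omega⟩), twoRho_apply_of_le hr hrn]
    simp only [paritySign, barWeight, if_pos hrn, if_pos (And.intro hr hrn)]
    omega
  · have hcm : lam r ≤ m := (hlam.1.apply_le_apply (by omega) (by omega)).trans hlam.2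
    rw [barWeight_eq_add_eps_of_lt hgam hlam (by omega) h,
      form_add_eps_sub_form (mem_Icc.2 ⟨by omega, by omega⟩), twoRho_apply_add (by omega) hcm,
      barWeight_apply_add_of_addsBox hgam hlam hr (by omega) h]
    simp only [paritySign, if_neg (by omega : ¬n + lam r ≤ n)]
    omega

end AddsBox

theorem form_barWeight_diff_two_added_boxes_general (n m : ℕ)
    (gam lam mu : ℕ → ℕ)
    (hgam : IsHookPartition n m gam) (hlam : IsHookPartition n m lam)
    (hmu : IsHookPartition n m mu)
    (rl rm : ℕ) (hrl : 1 ≤ rl) (hrm : 1 ≤ rm)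
    (hlbox : lam rl = gam rl + 1) (hlother : ∀ i, 1 ≤ i → i ≠ rl → lam i = gam i)
    (hmbox : mu rm = gam rm + 1) (hmother : ∀ i, 1 ≤ i → i ≠ rm → mu i = gam i) :
    form n m (barWeight n m lam) (barWeight n m lam + twoRho n m)
      - form n m (barWeight n m mu) (barWeight n m mu + twoRho n m)
      = 2 * ((lam rl : ℤ) - rl) - 2 * ((mu rm : ℤ) - rm) := by
  have hl := form_barWeight_sub_of_addsBox hgam.1 hlam hrl ⟨hlbox, hlother⟩
  have hm := form_barWeight_sub_of_addsBox hgam.1 hmu hrm ⟨hmbox, hmother⟩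
  linarith

/-- if the hook partitions `λ` and `μ` are each obtained from the hook
partition `γ` by adding a single box (`b_λ = (rl, λ_{rl})` and `b_μ = (rm, μ_{rm})`), then
`⟨λ̄, λ̄+2ρ⟩ − ⟨μ̄, μ̄+2ρ⟩ = 2·c(b_λ) − 2·c(b_μ)`. -/
theorem form_barWeight_diff_two_added_boxes (n m : ℕ) (hn : 1 ≤ n)
    (gam lam mu : ℕ → ℕ)
    (hgam : IsHookPartition n m gam) (hlam : IsHookPartition n m lam)
    (hmu : IsHookPartition n m mu)
    (rl rm : ℕ) (hrl : 1 ≤ rl) (hrm : 1 ≤ rm)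
    (hlbox : lam rl = gam rl + 1) (hlother : ∀ i, 1 ≤ i → i ≠ rl → lam i = gam i)
    (hmbox : mu rm = gam rm + 1) (hmother : ∀ i, 1 ≤ i → i ≠ rm → mu i = gam i) :
    form n m (barWeight n m lam) (barWeight n m lam + twoRho n m)
      - form n m (barWeight n m mu) (barWeight n m mu + twoRho n m)
      = 2 * ((lam rl : ℤ) - rl) - 2 * ((mu rm : ℤ) - rm) :=
  form_barWeight_diff_two_added_boxes_general n m gam lam mu hgam hlam hmu rl rm hrl hrm hlbox
    hlother hmbox hmother

end TwoBoundary
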